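/- Asymptotic portfolio and consumption ratios at large wealth (dual form): fix h₂ > 0, set h̄₁(y) = (y/z_α)^{−1/γ}, x(y) = −m₁·C₁(h̄₁(y), h₂)·y^{m₁−1} − m₂·C₂(h̄₁(y))·y^{m₂−1} + h̄₁(y)/r and p(y) = m₁(m₁−1)·C₁(h̄₁(y), h₂)·y^{m₁−1} + m₂(m₂−1)·C₂(h̄₁(y))·y^{m₂−1}. Then lim_{y→0⁺} p(y)/x(y) = 1/γ and lim_{y→0⁺} (y/z_α)^{−1/γ}/x(y) = κ²(m₁−1)(m₁−γ*)(m₂−γ*) / (2((1−γ*)z_α^{m₁−1} − m₁ + γ*)). -/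

import Mathlib

/-- Coefficient `C₂(h)`. -/
noncomputable def C2 (r δ κ γ m₁ m₂ α zα : ℝ) (h : ℝ) : ℝ :=
  (1 - (γ - 1) / γ) / ((m₁ - m₂) * (m₂ - (γ - 1) / γ)) *
    (m₁ * (α * δ - 1) / δ * zα ^ (-m₂) + (m₁ - 1) / r * zα ^ (1 - m₂)) *
    h ^ (1 + γ * (m₂ - 1))

/-- Coefficient `C₅(h)`. -/
noncomputable def C5 (r δ κ γ m₁ m₂ β zβ : ℝ) (h : ℝ) : ℝ :=
  (1 - (γ - 1) / γ) / ((m₁ - m₂) * (m₁ - (γ - 1) / γ)) *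
    (m₂ * (β * δ + 1) / δ * zβ ^ (-m₁) + (1 - m₂) / r * zβ ^ (1 - m₁)) *
    h ^ (1 + γ * (m₁ - 1))

/-- Coefficient `C₃(h)`. -/
noncomputable def C3 (r δ κ γ m₁ m₂ β zβ : ℝ) (h : ℝ) : ℝ :=
  C5 r δ κ γ m₁ m₂ β zβ h +
    2 * ((γ - 1) / γ - 1) / (κ ^ 2 * (m₁ - m₂) * m₁ * (m₁ - 1) * (m₁ - (γ - 1) / γ)) *
      h ^ (1 + γ * (m₁ - 1))

/-- Coefficient `C₄(h)`. -/
noncomputable def C4 (r δ κ γ m₁ m₂ α zα : ℝ) (h : ℝ) : ℝ :=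
  C2 r δ κ γ m₁ m₂ α zα h -
    2 * ((γ - 1) / γ - 1) / (κ ^ 2 * (m₁ - m₂) * m₂ * (m₂ - 1) * (m₂ - (γ - 1) / γ)) *
      h ^ (1 + γ * (m₂ - 1))

/-- Coefficient `C₁(h₁,h₂)`. -/
noncomputable def C1 (r δ κ γ m₁ m₂ β zβ : ℝ) (h₁ h₂ : ℝ) : ℝ :=
  C3 r δ κ γ m₁ m₂ β zβ h₂ +
    2 * (1 - (γ - 1) / γ) / (κ ^ 2 * (m₁ - m₂) * m₁ * (m₁ - 1) * (m₁ - (γ - 1) / γ)) *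
      h₁ ^ (1 + γ * (m₁ - 1))

/-- Coefficient `C₆(h₁,h₂)`. -/
noncomputable def C6 (r δ κ γ m₁ m₂ α zα : ℝ) (h₁ h₂ : ℝ) : ℝ :=
  C4 r δ κ γ m₁ m₂ α zα h₁ -
    2 * (1 - (γ - 1) / γ) / (κ ^ 2 * (m₁ - m₂) * m₂ * (m₂ - 1) * (m₂ - (γ - 1) / γ)) *
      h₂ ^ (1 + γ * (m₂ - 1))


open Filter Set

private lemma tendsto_rpow_zero' {e : ℝ} (he : 0 < e) :
    Tendsto (fun y : ℝ => y ^ e) (nhdsWithin 0 (Set.Ioi 0)) (nhds 0) := by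
  have h := (Real.continuousAt_rpow_const 0 e (Or.inr he.le)).tendsto
  rw [Real.zero_rpow he.ne'] at h
  exact h.mono_left nhdsWithin_le_nhds

private lemma key_pow {z y γ : ℝ} (hz : 0 < z) (hy : 0 < y) (hγ : γ ≠ 0) (a : ℝ) :
    ((y / z) ^ (-(1 / γ)) : ℝ) ^ (1 + γ * (a - 1)) * y ^ (a - 1)
      = z ^ (a - 1) * (y / z) ^ (-(1 / γ)) := by
  have hyz : 0 < y / z := div_pos hy hz
  have hyp : (0:ℝ) < y ^ (a - 1) := Real.rpow_pos_of_pos hy _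
  have h2 : (y / z) ^ (-(a - 1)) * y ^ (a - 1) = z ^ (a - 1) := by
    rw [Real.rpow_neg hyz.le, Real.div_rpow hy.le hz.le, inv_div,
      div_mul_cancel₀ _ hyp.ne']
  have he : -(1 / γ) * (1 + γ * (a - 1)) = -(1 / γ) + -(a - 1) := by
    field_simp
    ring
  rw [← Real.rpow_mul hyz.le, he, Real.rpow_add hyz, mul_assoc, h2, mul_comm]

private lemma tendsto_aux {zα γ m₁ : ℝ} (hzα : 0 < zα) (hγ : 0 < γ) (hm1 : 1 < m₁) :
    Tendsto (fun y : ℝ => y ^ (m₁ - 1) * (y / zα) ^ (1 / γ))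
      (nhdsWithin 0 (Set.Ioi 0)) (nhds 0) := by
  have h1 : Tendsto (fun y : ℝ => y ^ (m₁ - 1)) (nhdsWithin 0 (Set.Ioi 0)) (nhds 0) :=
    tendsto_rpow_zero' (by linarith)
  have hdiv : Tendsto (fun y : ℝ => y / zα) (nhdsWithin 0 (Set.Ioi 0))
      (nhdsWithin 0 (Set.Ioi 0)) := by
    apply tendsto_nhdsWithin_of_tendsto_nhds_of_eventually_within
    · have h0 : Tendsto (fun y : ℝ => y / zα) (nhds 0) (nhds (0 / zα)) :=
        (continuous_id.div_const zα).tendsto 0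
      simpa using h0.mono_left nhdsWithin_le_nhds
    · filter_upwards [self_mem_nhdsWithin] with y hy
      exact div_pos hy hzα
  have h2 : Tendsto (fun y : ℝ => (y / zα) ^ (1 / γ)) (nhdsWithin 0 (Set.Ioi 0)) (nhds 0) :=
    (tendsto_rpow_zero' (by positivity)).comp hdiv
  simpa using h1.mul h2

private lemma ratio_tendsto {zα γ m₁ : ℝ} (hzα : 0 < zα) (hγ : 0 < γ) (hm1 : 1 < m₁)
    (p q A B : ℝ) (hA : A ≠ 0) :
    Tendsto (fun y : ℝ => (p * y ^ (m₁ - 1) + B * (y / zα) ^ (-(1 / γ))) /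
        (q * y ^ (m₁ - 1) + A * (y / zα) ^ (-(1 / γ))))
      (nhdsWithin 0 (Set.Ioi 0)) (nhds (B / A)) := by
  have key : ∀ y ∈ Ioi (0:ℝ),
      (p * (y ^ (m₁-1) * (y/zα) ^ (1/γ)) + B) / (q * (y ^ (m₁-1) * (y/zα) ^ (1/γ)) + A)
        = (p * y ^ (m₁-1) + B * (y/zα) ^ (-(1/γ))) /
            (q * y ^ (m₁-1) + A * (y/zα) ^ (-(1/γ))) := by
    intro y hy
    have hyz : 0 < y / zα := div_pos hy hzα
    have hH : (0:ℝ) < (y/zα) ^ (-(1/γ)) := Real.rpow_pos_of_pos hyz _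
    have hcan : (y/zα) ^ (1/γ) * (y/zα) ^ (-(1/γ)) = 1 := by
      rw [← Real.rpow_add hyz]; simp
    rw [← mul_div_mul_right _ _ hH.ne']
    congr 1
    · calc (p * (y ^ (m₁-1) * (y/zα) ^ (1/γ)) + B) * (y/zα) ^ (-(1/γ))
          = p * y ^ (m₁-1) * ((y/zα) ^ (1/γ) * (y/zα) ^ (-(1/γ))) + B * (y/zα) ^ (-(1/γ)) := by
            ring
        _ = _ := by rw [hcan]; ring
    · calc (q * (y ^ (m₁-1) * (y/zα) ^ (1/γ)) + A) * (y/zα) ^ (-(1/γ))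
          = q * y ^ (m₁-1) * ((y/zα) ^ (1/γ) * (y/zα) ^ (-(1/γ))) + A * (y/zα) ^ (-(1/γ)) := by
            ring
        _ = _ := by rw [hcan]; ring
  have ht := tendsto_aux hzα hγ hm1
  have hnum : Tendsto (fun y : ℝ => p * (y ^ (m₁-1) * (y/zα) ^ (1/γ)) + B)
      (nhdsWithin 0 (Set.Ioi 0)) (nhds B) := by
    simpa using (ht.const_mul p).add_const B
  have hden : Tendsto (fun y : ℝ => q * (y ^ (m₁-1) * (y/zα) ^ (1/γ)) + A)
      (nhdsWithin 0 (Set.Ioi 0)) (nhds A) := by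
    simpa using (ht.const_mul q).add_const A
  exact (hnum.div hden hA).congr' (eventuallyEq_of_mem self_mem_nhdsWithin key)

private lemma ratio_tendsto2 {zα γ m₁ : ℝ} (hzα : 0 < zα) (hγ : 0 < γ) (hm1 : 1 < m₁)
    (q A : ℝ) (hA : A ≠ 0) :
    Tendsto (fun y : ℝ => (y / zα) ^ (-(1 / γ)) /
        (q * y ^ (m₁ - 1) + A * (y / zα) ^ (-(1 / γ))))
      (nhdsWithin 0 (Set.Ioi 0)) (nhds (1 / A)) := by
  have key : ∀ y ∈ Ioi (0:ℝ),
      1 / (q * (y ^ (m₁-1) * (y/zα) ^ (1/γ)) + A)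
        = (y/zα) ^ (-(1/γ)) / (q * y ^ (m₁-1) + A * (y/zα) ^ (-(1/γ))) := by
    intro y hy
    have hyz : 0 < y / zα := div_pos hy hzα
    have hH : (0:ℝ) < (y/zα) ^ (-(1/γ)) := Real.rpow_pos_of_pos hyz _
    have hcan : (y/zα) ^ (1/γ) * (y/zα) ^ (-(1/γ)) = 1 := by
      rw [← Real.rpow_add hyz]; simp
    rw [← mul_div_mul_right _ _ hH.ne', one_mul]
    congr 1
    calc (q * (y ^ (m₁-1) * (y/zα) ^ (1/γ)) + A) * (y/zα) ^ (-(1/γ))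
        = q * y ^ (m₁-1) * ((y/zα) ^ (1/γ) * (y/zα) ^ (-(1/γ))) + A * (y/zα) ^ (-(1/γ)) := by
          ring
      _ = _ := by rw [hcan]; ring
  have ht := tendsto_aux hzα hγ hm1
  have hden : Tendsto (fun y : ℝ => q * (y ^ (m₁-1) * (y/zα) ^ (1/γ)) + A)
      (nhdsWithin 0 (Set.Ioi 0)) (nhds A) := by
    simpa using (ht.const_mul q).add_const A
  exact (tendsto_const_nhds.div hden hA).congr' (eventuallyEq_of_mem self_mem_nhdsWithin key)

private lemma algT1 (r δ κ m₁ m₂ α zα Z : ℝ) (hr : r ≠ 0) (hδ : δ ≠ 0) (hκ : κ ≠ 0)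
    (hzα : zα ≠ 0) (hm1 : m₁ ≠ 0) (hm11 : m₁ - 1 ≠ 0) (hm2 : m₂ ≠ 0)
    (heq : 2 / (κ ^ 2 * m₁ * (m₁ - 1)) * (Z * zα) + zα / r * (m₂ - 1) + m₂ * (α - 1 / δ) = 0) :
    m₁ * (α * δ - 1) / δ * zα⁻¹
      = -(2 / (κ ^ 2 * (m₁ - 1) * m₂)) * Z - m₁ * (m₂ - 1) / (m₂ * r) := by
  field_simp at heq ⊢
  linear_combination heq

set_option maxHeartbeats 1000000 in
private lemma algAB (r δ κ G m₁ m₂ α zα Z : ℝ) (hr : r ≠ 0) (hδ : δ ≠ 0) (hκ : κ ≠ 0)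
    (hzα : zα ≠ 0) (hm1 : m₁ ≠ 0) (hm11 : m₁ - 1 ≠ 0) (hm2 : m₂ ≠ 0)
    (hmm : m₁ - m₂ ≠ 0) (hm1g : m₁ - G ≠ 0) (hm2g : m₂ - G ≠ 0)
    (heq : 2 / (κ ^ 2 * m₁ * (m₁ - 1)) * (Z * zα) + zα / r * (m₂ - 1) + m₂ * (α - 1 / δ) = 0)
    (hv : κ ^ 2 * (m₁ - 1) * (m₂ - 1) = -2 * r) :
    1 / r - m₁ * (2 * (1 - G) / (κ ^ 2 * (m₁ - m₂) * m₁ * (m₁ - 1) * (m₁ - G))) * Z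
        - m₂ * ((1 - G) / ((m₁ - m₂) * (m₂ - G)) *
            (m₁ * (α * δ - 1) / δ * zα⁻¹ + (m₁ - 1) / r))
      = 2 * ((1 - G) * Z - m₁ + G) / (κ ^ 2 * (m₁ - 1) * (m₁ - G) * (m₂ - G)) ∧
    m₁ * (m₁ - 1) * (2 * (1 - G) / (κ ^ 2 * (m₁ - m₂) * m₁ * (m₁ - 1) * (m₁ - G))) * Z
        + m₂ * (m₂ - 1) * ((1 - G) / ((m₁ - m₂) * (m₂ - G)) *
            (m₁ * (α * δ - 1) / δ * zα⁻¹ + (m₁ - 1) / r))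
      = (1 - G) * (2 * ((1 - G) * Z - m₁ + G) / (κ ^ 2 * (m₁ - 1) * (m₁ - G) * (m₂ - G))) := by
  have hT1 := algT1 r δ κ m₁ m₂ α zα Z hr hδ hκ hzα hm1 hm11 hm2 heq
  have hDen : κ ^ 2 * (m₁ - 1) * (m₁ - G) * (m₂ - G) ≠ 0 :=
    mul_ne_zero (mul_ne_zero (mul_ne_zero (pow_ne_zero 2 hκ) hm11) hm1g) hm2g
  have hDen2 : (m₂ - G) * r ≠ 0 := mul_ne_zero hm2g hr
  have hA1 : 1 / r - m₁ * (2 * (1 - G) / (κ ^ 2 * (m₁ - m₂) * m₁ * (m₁ - 1) * (m₁ - G))) * Z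
        - m₂ * ((1 - G) / ((m₁ - m₂) * (m₂ - G)) *
            (m₁ * (α * δ - 1) / δ * zα⁻¹ + (m₁ - 1) / r))
      = (m₂ - 1) / ((m₂ - G) * r)
        + 2 * (1 - G) * Z / (κ ^ 2 * (m₁ - 1) * (m₁ - G) * (m₂ - G)) := by
    rw [hT1]
    field_simp
    ring
  have hA2 : (m₂ - 1) / ((m₂ - G) * r)
      = 2 * (G - m₁) / (κ ^ 2 * (m₁ - 1) * (m₁ - G) * (m₂ - G)) := by
    rw [div_eq_div_iff hDen2 hDen]
    linear_combination (m₁ - G) * (m₂ - G) * hv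
  have hA : 1 / r - m₁ * (2 * (1 - G) / (κ ^ 2 * (m₁ - m₂) * m₁ * (m₁ - 1) * (m₁ - G))) * Z
        - m₂ * ((1 - G) / ((m₁ - m₂) * (m₂ - G)) *
            (m₁ * (α * δ - 1) / δ * zα⁻¹ + (m₁ - 1) / r))
      = 2 * ((1 - G) * Z - m₁ + G) / (κ ^ 2 * (m₁ - 1) * (m₁ - G) * (m₂ - G)) := by
    rw [hA1, hA2, ← add_div]
    congr 1
    ring
  refine ⟨hA, ?_⟩
  rw [← hA, hT1]
  field_simp
  ring

set_option maxHeartbeats 4000000 in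
/-- Asymptotic portfolio and consumption ratios at large wealth (dual
form). With `h̄₁(y) = (y/z_α)^{−1/γ}`,
`x(y) = −m₁ C₁(h̄₁(y),h₂) y^{m₁−1} − m₂ C₂(h̄₁(y)) y^{m₂−1} + h̄₁(y)/r` and
`p(y) = m₁(m₁−1) C₁(h̄₁(y),h₂) y^{m₁−1} + m₂(m₂−1) C₂(h̄₁(y)) y^{m₂−1}`, one has
`lim_{y→0⁺} p(y)/x(y) = 1/γ` and
`lim_{y→0⁺} h̄₁(y)/x(y) = κ²(m₁−1)(m₁−γ*)(m₂−γ*)/(2((1−γ*)z_α^{m₁−1} − m₁ + γ*))`. -/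

theorem asymptotic_ratios_large_wealth (r δ κ γ m₁ m₂ α β zα zβ : ℝ)
    (hr : 0 < r) (hδ : 0 < δ) (hκ : 0 < κ) (hγ : 0 < γ) (hγ1 : γ ≠ 1)
    (hK : 0 < r + (δ - r) / γ + ((γ - 1) / (2 * γ ^ 2)) * κ ^ 2)
    (hQ1 : κ ^ 2 / 2 * m₁ ^ 2 + (δ - r - κ ^ 2 / 2) * m₁ - δ = 0)
    (hQ2 : κ ^ 2 / 2 * m₂ ^ 2 + (δ - r - κ ^ 2 / 2) * m₂ - δ = 0)
    (hm1 : 1 < m₁) (hm2 : m₂ < min ((γ - 1) / γ) 0)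
    (hα : 0 ≤ α) (hα' : α < 1 / δ) (hβ : 0 ≤ β)
    (hzα : zα ∈ Set.Ioc 0 (1 - α * δ))
    (hzαeq : 2 / (κ ^ 2 * m₁ * (m₁ - 1)) * zα ^ m₁ + zα / r * (m₂ - 1) + m₂ * (α - 1 / δ) = 0)
    (hzβ : zβ ∈ Set.Ici (1 + β * δ))
    (hzβeq : 2 / (κ ^ 2 * m₂ * (m₂ - 1)) * zβ ^ m₂ + zβ / r * (m₁ - 1) - m₁ * (β + 1 / δ) = 0)
    :
    ∀ h₂ : ℝ, 0 < h₂ →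
      Filter.Tendsto (fun y : ℝ =>
          (m₁ * (m₁ - 1) * C1 r δ κ γ m₁ m₂ β zβ ((y / zα) ^ (-(1 / γ))) h₂ * y ^ (m₁ - 1) +
              m₂ * (m₂ - 1) * C2 r δ κ γ m₁ m₂ α zα ((y / zα) ^ (-(1 / γ))) * y ^ (m₂ - 1)) /
            (-(m₁ * C1 r δ κ γ m₁ m₂ β zβ ((y / zα) ^ (-(1 / γ))) h₂ * y ^ (m₁ - 1)) -
              m₂ * C2 r δ κ γ m₁ m₂ α zα ((y / zα) ^ (-(1 / γ))) * y ^ (m₂ - 1) +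
              (y / zα) ^ (-(1 / γ)) / r))
        (nhdsWithin 0 (Set.Ioi 0)) (nhds (1 / γ)) ∧
      Filter.Tendsto (fun y : ℝ =>
          (y / zα) ^ (-(1 / γ)) /
            (-(m₁ * C1 r δ κ γ m₁ m₂ β zβ ((y / zα) ^ (-(1 / γ))) h₂ * y ^ (m₁ - 1)) -
              m₂ * C2 r δ κ γ m₁ m₂ α zα ((y / zα) ^ (-(1 / γ))) * y ^ (m₂ - 1) +
              (y / zα) ^ (-(1 / γ)) / r))
        (nhdsWithin 0 (Set.Ioi 0))
        (nhds (κ ^ 2 * (m₁ - 1) * (m₁ - (γ - 1) / γ) * (m₂ - (γ - 1) / γ) /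
          (2 * ((1 - (γ - 1) / γ) * zα ^ (m₁ - 1) - m₁ + (γ - 1) / γ)))) := by
  intro h₂ hh₂
  have hγ0 : γ ≠ 0 := ne_of_gt hγ
  have hzα0 : 0 < zα := hzα.1
  have hm2n : m₂ < 0 := lt_of_lt_of_le hm2 (min_le_right _ _)
  have hm2G : m₂ < (γ - 1) / γ := lt_of_lt_of_le hm2 (min_le_left _ _)
  have hG1 : (γ - 1) / γ < 1 := by
    rw [div_lt_one hγ]; linarith
  have hGpos : 0 < 1 - (γ - 1) / γ := by linarith
  have hrne : r ≠ 0 := ne_of_gt hr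
  have hδne : δ ≠ 0 := ne_of_gt hδ
  have hκne : κ ≠ 0 := ne_of_gt hκ
  have hm1ne : m₁ ≠ 0 := by intro h; rw [h] at hm1; linarith
  have hm11 : m₁ - 1 ≠ 0 := by intro h; nlinarith
  have hm2ne : m₂ ≠ 0 := ne_of_lt hm2n
  have hmm : m₁ - m₂ ≠ 0 := by intro h; nlinarith
  have hm1gne : m₁ - (γ - 1) / γ ≠ 0 := by intro h; nlinarith
  have hm2gne : m₂ - (γ - 1) / γ ≠ 0 := by intro h; nlinarith
  -- Vieta
  have hsum0 : (m₁ - m₂) * (κ ^ 2 / 2 * (m₁ + m₂) + (δ - r - κ ^ 2 / 2)) = 0 := by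
    linear_combination hQ1 - hQ2
  have hsum : κ ^ 2 / 2 * (m₁ + m₂) + (δ - r - κ ^ 2 / 2) = 0 := by
    rcases mul_eq_zero.mp hsum0 with h | h
    · exact absurd h hmm
    · exact h
  have hprod : κ ^ 2 / 2 * (m₁ * m₂) + δ = 0 := by
    linear_combination m₁ * hsum - hQ1
  have hv : κ ^ 2 * (m₁ - 1) * (m₂ - 1) = -2 * r := by
    linear_combination 2 * hprod - 2 * hsum
  -- the zα equation with zα ^ m₁ split
  have hZz : zα ^ (m₁ - 1) * zα = zα ^ m₁ := by
    rw [← Real.rpow_add_one hzα0.ne' (m₁ - 1), sub_add_cancel]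
  have heq : 2 / (κ ^ 2 * m₁ * (m₁ - 1)) * (zα ^ (m₁ - 1) * zα) + zα / r * (m₂ - 1)
      + m₂ * (α - 1 / δ) = 0 := by
    rw [hZz]; exact hzαeq
  obtain ⟨hA, hB⟩ := algAB r δ κ ((γ - 1) / γ) m₁ m₂ α zα (zα ^ (m₁ - 1)) hrne hδne hκne
    hzα0.ne' hm1ne hm11 hm2ne hmm hm1gne hm2gne heq hv
  -- the limit value is nonzero
  have hzα1 : zα ≤ 1 := by nlinarith [mul_nonneg hα hδ.le, hzα.2]
  have hZle : zα ^ (m₁ - 1) ≤ 1 := Real.rpow_le_one hzα0.le hzα1 (by linarith)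
  have hZpos : 0 < zα ^ (m₁ - 1) := Real.rpow_pos_of_pos hzα0 _
  have hnumne : 2 * ((1 - (γ - 1) / γ) * zα ^ (m₁ - 1) - m₁ + (γ - 1) / γ) ≠ 0 := by
    have h1 : (1 - (γ - 1) / γ) * zα ^ (m₁ - 1) ≤ (1 - (γ - 1) / γ) * 1 :=
      mul_le_mul_of_nonneg_left hZle hGpos.le
    nlinarith
  have hdenne : κ ^ 2 * (m₁ - 1) * (m₁ - (γ - 1) / γ) * (m₂ - (γ - 1) / γ) ≠ 0 :=
    mul_ne_zero (mul_ne_zero (mul_ne_zero (pow_ne_zero 2 hκne) hm11) hm1gne) hm2gne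
  have hAne : 2 * ((1 - (γ - 1) / γ) * zα ^ (m₁ - 1) - m₁ + (γ - 1) / γ) /
      (κ ^ 2 * (m₁ - 1) * (m₁ - (γ - 1) / γ) * (m₂ - (γ - 1) / γ)) ≠ 0 :=
    div_ne_zero hnumne hdenne
  -- rewrite the zα-power products appearing in `C2`
  have hw1 : zα ^ (-m₂) * zα ^ (m₂ - 1) = zα⁻¹ := by
    rw [← Real.rpow_add hzα0, show -m₂ + (m₂ - 1) = (-1 : ℝ) by ring, Real.rpow_neg_one]
  have hw2 : zα ^ (1 - m₂) * zα ^ (m₂ - 1) = 1 := by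
    rw [← Real.rpow_add hzα0, show 1 - m₂ + (m₂ - 1) = (0 : ℝ) by ring, Real.rpow_zero]
  -- pointwise identities for the numerator and the denominator
  have hDenEq : ∀ y ∈ Set.Ioi (0:ℝ),
      -(m₁ * C3 r δ κ γ m₁ m₂ β zβ h₂) * y ^ (m₁ - 1) +
          (2 * ((1 - (γ - 1) / γ) * zα ^ (m₁ - 1) - m₁ + (γ - 1) / γ) /
            (κ ^ 2 * (m₁ - 1) * (m₁ - (γ - 1) / γ) * (m₂ - (γ - 1) / γ))) *
            (y / zα) ^ (-(1 / γ))
        = -(m₁ * C1 r δ κ γ m₁ m₂ β zβ ((y / zα) ^ (-(1 / γ))) h₂ * y ^ (m₁ - 1)) -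
            m₂ * C2 r δ κ γ m₁ m₂ α zα ((y / zα) ^ (-(1 / γ))) * y ^ (m₂ - 1) +
            (y / zα) ^ (-(1 / γ)) / r := by
    intro y hy
    have hk1 := key_pow hzα0 hy hγ0 m₁
    have hk2 := key_pow hzα0 hy hγ0 m₂
    simp only [C1, C2]
    linear_combination
      (m₁ * (2 * (1 - (γ - 1) / γ) /
          (κ ^ 2 * (m₁ - m₂) * m₁ * (m₁ - 1) * (m₁ - (γ - 1) / γ)))) * hk1
      + (m₂ * ((1 - (γ - 1) / γ) / ((m₁ - m₂) * (m₂ - (γ - 1) / γ))) *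
          (m₁ * (α * δ - 1) / δ * zα ^ (-m₂) + (m₁ - 1) / r * zα ^ (1 - m₂))) * hk2
      + (m₂ * ((1 - (γ - 1) / γ) / ((m₁ - m₂) * (m₂ - (γ - 1) / γ))) * (m₁ * (α * δ - 1) / δ) *
          (y / zα) ^ (-(1 / γ))) * hw1
      + (m₂ * ((1 - (γ - 1) / γ) / ((m₁ - m₂) * (m₂ - (γ - 1) / γ))) * ((m₁ - 1) / r) *
          (y / zα) ^ (-(1 / γ))) * hw2
      + (-((y / zα) ^ (-(1 / γ)))) * hA
  have hNumEq : ∀ y ∈ Set.Ioi (0:ℝ),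
      (m₁ * (m₁ - 1) * C3 r δ κ γ m₁ m₂ β zβ h₂) * y ^ (m₁ - 1) +
          ((1 - (γ - 1) / γ) * (2 * ((1 - (γ - 1) / γ) * zα ^ (m₁ - 1) - m₁ + (γ - 1) / γ) /
            (κ ^ 2 * (m₁ - 1) * (m₁ - (γ - 1) / γ) * (m₂ - (γ - 1) / γ)))) *
            (y / zα) ^ (-(1 / γ))
        = m₁ * (m₁ - 1) * C1 r δ κ γ m₁ m₂ β zβ ((y / zα) ^ (-(1 / γ))) h₂ * y ^ (m₁ - 1) +
            m₂ * (m₂ - 1) * C2 r δ κ γ m₁ m₂ α zα ((y / zα) ^ (-(1 / γ))) * y ^ (m₂ - 1) := by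
    intro y hy
    have hk1 := key_pow hzα0 hy hγ0 m₁
    have hk2 := key_pow hzα0 hy hγ0 m₂
    simp only [C1, C2]
    linear_combination
      (-(m₁ * (m₁ - 1) * (2 * (1 - (γ - 1) / γ) /
          (κ ^ 2 * (m₁ - m₂) * m₁ * (m₁ - 1) * (m₁ - (γ - 1) / γ))))) * hk1
      + (-(m₂ * (m₂ - 1) * ((1 - (γ - 1) / γ) / ((m₁ - m₂) * (m₂ - (γ - 1) / γ))) *
          (m₁ * (α * δ - 1) / δ * zα ^ (-m₂) + (m₁ - 1) / r * zα ^ (1 - m₂)))) * hk2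
      + (-(m₂ * (m₂ - 1) * ((1 - (γ - 1) / γ) / ((m₁ - m₂) * (m₂ - (γ - 1) / γ))) *
          (m₁ * (α * δ - 1) / δ) * (y / zα) ^ (-(1 / γ)))) * hw1
      + (-(m₂ * (m₂ - 1) * ((1 - (γ - 1) / γ) / ((m₁ - m₂) * (m₂ - (γ - 1) / γ))) *
          ((m₁ - 1) / r) * (y / zα) ^ (-(1 / γ)))) * hw2
      + (-((y / zα) ^ (-(1 / γ)))) * hB
  constructor
  · have hmain := ratio_tendsto hzα0 hγ hm1
      (m₁ * (m₁ - 1) * C3 r δ κ γ m₁ m₂ β zβ h₂) (-(m₁ * C3 r δ κ γ m₁ m₂ β zβ h₂))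
      (2 * ((1 - (γ - 1) / γ) * zα ^ (m₁ - 1) - m₁ + (γ - 1) / γ) /
        (κ ^ 2 * (m₁ - 1) * (m₁ - (γ - 1) / γ) * (m₂ - (γ - 1) / γ)))
      ((1 - (γ - 1) / γ) * (2 * ((1 - (γ - 1) / γ) * zα ^ (m₁ - 1) - m₁ + (γ - 1) / γ) /
        (κ ^ 2 * (m₁ - 1) * (m₁ - (γ - 1) / γ) * (m₂ - (γ - 1) / γ)))) hAne
    have hlim : (1 - (γ - 1) / γ) * (2 * ((1 - (γ - 1) / γ) * zα ^ (m₁ - 1) - m₁ + (γ - 1) / γ) /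
        (κ ^ 2 * (m₁ - 1) * (m₁ - (γ - 1) / γ) * (m₂ - (γ - 1) / γ))) /
        (2 * ((1 - (γ - 1) / γ) * zα ^ (m₁ - 1) - m₁ + (γ - 1) / γ) /
        (κ ^ 2 * (m₁ - 1) * (m₁ - (γ - 1) / γ) * (m₂ - (γ - 1) / γ))) = 1 / γ := by
      rw [mul_div_assoc, div_self hAne, mul_one]
      field_simp
      ring
    rw [hlim] at hmain
    refine hmain.congr' ?_
    filter_upwards [self_mem_nhdsWithin] with y hy
    rw [hNumEq y hy, hDenEq y hy]
  · have hmain := ratio_tendsto2 hzα0 hγ hm1 (-(m₁ * C3 r δ κ γ m₁ m₂ β zβ h₂))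
      (2 * ((1 - (γ - 1) / γ) * zα ^ (m₁ - 1) - m₁ + (γ - 1) / γ) /
        (κ ^ 2 * (m₁ - 1) * (m₁ - (γ - 1) / γ) * (m₂ - (γ - 1) / γ))) hAne
    rw [one_div_div] at hmain
    refine hmain.congr' ?_
    filter_upwards [self_mem_nhdsWithin] with y hy
    rw [hDenEq y hy]
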